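/- arXiv:1907.09550 — 3 statements merged into one kernel-verified Lean document; each statement's English description precedes it below -/
import Mathlib

section
/- If a combinatorial Morse function g is equivalent to f (i.e., induces the same gradient vector field), and h is defined by h(σ) = min over all nonnegative-integer-valued Morse functions g' equivalent to f of g'(σ), then h is itself a combinatorial Morse function equivalent to f. -/
open Finset

variable {V : Type*}

/-- A finite abstract simplicial complex: a finite family of nonempty finite vertex sets
closed under passing to nonempty subsets. -/
def IsComplex [DecidableEq V] (K : Finset (Finset V)) : Prop :=
  (∀ σ ∈ K, σ.Nonempty) ∧ ∀ σ ∈ K, ∀ τ : Finset V, τ ⊆ σ → τ.Nonempty → τ ∈ K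

/-- Dimension of a simplex. -/
def dimS (σ : Finset V) : ℕ := σ.card - 1

/-- `σ` is an immediate face (facet) of `τ`. -/
def Facet [DecidableEq V] (σ τ : Finset V) : Prop := σ ⊆ τ ∧ σ.card + 1 = τ.card

instance [DecidableEq V] (σ τ : Finset V) : Decidable (Facet σ τ) := by
  unfold Facet; infer_instance

/-- A discrete (combinatorial) Morse function in the sense of Forman. -/
def IsMorse [DecidableEq V] {α : Type*} [LinearOrder α]
    (K : Finset (Finset V)) (f : Finset V → α) : Prop :=
  ∀ σ ∈ K,
    (K.filter (fun τ => Facet σ τ ∧ f τ ≤ f σ)).card ≤ 1 ∧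
    (K.filter (fun ν => Facet ν σ ∧ f σ ≤ f ν)).card ≤ 1

/-- Two discrete Morse functions are equivalent (induce the same gradient field). -/
def MorseEquiv [DecidableEq V] {α β : Type*} [LinearOrder α] [LinearOrder β]
    (K : Finset (Finset V)) (f : Finset V → α) (g : Finset V → β) : Prop :=
  ∀ σ ∈ K, ∀ τ ∈ K, Facet σ τ → (f σ < f τ ↔ g σ < g τ)

/-- A gradient pair of `f`. -/
def GradPair [DecidableEq V] (K : Finset (Finset V)) (f : Finset V → ℝ)
    (σ τ : Finset V) : Prop :=
  σ ∈ K ∧ τ ∈ K ∧ Facet σ τ ∧ f τ ≤ f σ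

/-- The normalization `h_f` of a discrete Morse function `f`. -/
noncomputable def normalization [DecidableEq V] (K : Finset (Finset V))
    (f : Finset V → ℝ) (σ : Finset V) : ℕ :=
  sInf {n : ℕ | ∃ g : Finset V → ℕ, IsMorse K g ∧ MorseEquiv K f g ∧ g σ = n}

/-- A critical simplex of `f`. -/
def IsCritical [DecidableEq V] {α : Type*} [LinearOrder α]
    (K : Finset (Finset V)) (f : Finset V → α) (σ : Finset V) : Prop :=
  σ ∈ K ∧ (∀ τ ∈ K, Facet σ τ → f σ < f τ) ∧ (∀ ν ∈ K, Facet ν σ → f ν < f σ)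

instance [DecidableEq V] {α : Type*} [LinearOrder α]
    (K : Finset (Finset V)) (f : Finset V → α) (σ : Finset V) :
    Decidable (IsCritical K f σ) := by
  unfold IsCritical; infer_instance

/-- The alternating sum of `h_f` over all simplices of `K`. -/
noncomputable def morseSum [DecidableEq V] (K : Finset (Finset V)) (f : Finset V → ℝ) : ℤ :=
  ∑ σ ∈ K, (-1 : ℤ) ^ (dimS σ) * (normalization K f σ : ℤ)

/-- The alternating sum of `h_f` over the critical simplices of `f`. -/
noncomputable def critSum [DecidableEq V] (K : Finset (Finset V)) (f : Finset V → ℝ) : ℤ :=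
  ∑ σ ∈ K.filter (fun σ => IsCritical K f σ),
    (-1 : ℤ) ^ (dimS σ) * (normalization K f σ : ℤ)

/-- Number of critical simplices of `f`. -/
noncomputable def numCritical [DecidableEq V] (K : Finset (Finset V)) (f : Finset V → ℝ) : ℕ :=
  (K.filter (fun σ => IsCritical K f σ)).card

/-- An optimal discrete Morse function minimizes the number of critical simplices. -/
def IsOptimal [DecidableEq V] (K : Finset (Finset V)) (f : Finset V → ℝ) : Prop :=
  IsMorse K f ∧ ∀ g : Finset V → ℝ, IsMorse K g → numCritical K f ≤ numCritical K g

/-- The invariant `𝔑(K)`: minimum of `|𝔑(K,f)|` over optimal Morse functions. -/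
noncomputable def NK [DecidableEq V] (K : Finset (Finset V)) : ℕ :=
  sInf {n : ℕ | ∃ f : Finset V → ℝ, IsOptimal K f ∧ n = (critSum K f).natAbs}

/-- An elementary collapse removing the free pair `(σ, τ)`. -/
def CollapseStep [DecidableEq V] (K K' : Finset (Finset V)) : Prop :=
  ∃ σ τ, σ ∈ K ∧ τ ∈ K ∧ Facet σ τ ∧ (∀ ρ ∈ K, σ ⊂ ρ → ρ = τ) ∧
    K' = (K.erase σ).erase τ

/-- Collapsibility: `K` collapses to a point by elementary collapses. -/
def Collapsible [DecidableEq V] (K : Finset (Finset V)) : Prop :=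
  ∃ v : V, Relation.ReflTransGen CollapseStep K {{v}}

/-- Connectivity of a complex. -/
def ComplexConnected [DecidableEq V] (K : Finset (Finset V)) : Prop :=
  K.Nonempty ∧ ∀ u v : V, {u} ∈ K → {v} ∈ K →
    Relation.ReflTransGen (fun a b => ({a, b} : Finset V) ∈ K) u v

/-- Signed incidence number `⟨∂τ, ν⟩` of an immediate face. -/
noncomputable def bsign [DecidableEq V] [LinearOrder V] (ν τ : Finset V) : ℝ :=
  if Facet ν τ then ∑ v ∈ τ \ ν, (-1 : ℝ) ^ ((τ.filter (fun u => u < v)).card) else 0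

/-- The simplicial boundary of a real chain `c` supported on `K`. -/
noncomputable def bnd [DecidableEq V] [LinearOrder V] (K : Finset (Finset V))
    (c : Finset V → ℝ) (ν : Finset V) : ℝ :=
  ∑ τ ∈ K, bsign ν τ * c τ

/-- A `k`-chain of `K`. -/
def IsChainOf (K : Finset (Finset V)) (k : ℕ) (c : Finset V → ℝ) : Prop :=
  ∀ τ, c τ ≠ 0 → τ ∈ K ∧ τ.card = k + 1

/-- `H₂(K; ℝ) = 0` for a complex of dimension `≤ 2`: every 2-cycle is zero. -/
def H2Zero [DecidableEq V] [LinearOrder V] (K : Finset (Finset V)) : Prop :=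
  ∀ c : Finset V → ℝ, IsChainOf K 2 c → (∀ ν, bnd K c ν = 0) → ∀ τ, c τ = 0

/-- `H₁(K; ℝ) = 0`: every 1-cycle is a boundary. -/
def H1Zero [DecidableEq V] [LinearOrder V] (K : Finset (Finset V)) : Prop :=
  ∀ c : Finset V → ℝ, IsChainOf K 1 c → (∀ ν, bnd K c ν = 0) →
    ∃ d : Finset V → ℝ, IsChainOf K 2 d ∧ ∀ ν, bnd K d ν = c ν

/-- Acyclicity (all reduced real homology vanishes) for a complex of dimension `≤ 2`. -/
def Acyclic [DecidableEq V] [LinearOrder V] (K : Finset (Finset V)) : Prop :=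
  ComplexConnected K ∧ H1Zero K ∧ H2Zero K

/-- Euler characteristic. -/
def eulerChar (K : Finset (Finset V)) : ℤ :=
  ∑ σ ∈ K, (-1 : ℤ) ^ (dimS σ)

/-- Gradient paths: `GPath K f σ₀ σᵣ p` says `p = [σ₀, τ₀, σ₁, τ₁, …, σᵣ]` is a gradient
path of `f` from `σ₀` to `σᵣ`. -/
inductive GPath [DecidableEq V] (K : Finset (Finset V)) (f : Finset V → ℝ) :
    Finset V → Finset V → List (Finset V) → Prop
  | nil : ∀ σ, σ ∈ K → GPath K f σ σ [σ]
  | cons : ∀ σ τ σ' e l, σ ∈ K → τ ∈ K → Facet σ τ → f τ ≤ f σ → Facet σ' τ → σ' ≠ σ →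
      GPath K f σ' e l → GPath K f σ e (σ :: τ :: l)

/-- Multiplicity (weight) of a gradient path, following Forman. -/
noncomputable def pweight [DecidableEq V] [LinearOrder V] : List (Finset V) → ℝ
  | σ :: τ :: rest => (-(bsign σ τ) * bsign rest.headI τ) * pweight rest
  | _ => 1

/-- The coefficient `λ^τ_σ` of `σ` in the Morse-complex boundary of `τ`. -/
noncomputable def morseCoeff [DecidableEq V] [LinearOrder V] (K : Finset (Finset V))
    (f : Finset V → ℝ) (τ σ : Finset V) : ℝ :=
  ∑ᶠ p ∈ {p : List (Finset V) | Facet p.headI τ ∧ GPath K f p.headI σ p},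
    bsign p.headI τ * pweight p

/-- One stellar subdivision step (at `σ`, with new vertex `v`). -/
def StellarStep (K K' : Finset (Finset ℕ)) : Prop :=
  ∃ σ v, σ ∈ K ∧ 2 ≤ σ.card ∧ (∀ τ ∈ K, v ∉ τ) ∧
    K' = K.filter (fun τ => ¬ σ ⊆ τ) ∪
      (K.filter (fun τ => σ ⊆ τ)).biUnion
        (fun τ => (σ.powerset.filter (fun μ => μ ≠ σ)).image
          (fun μ => insert v ((τ \ σ) ∪ μ)))

/-- Subdivisions (iterated stellar subdivisions). -/
def Subdivision (K L : Finset (Finset ℕ)) : Prop :=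
  Relation.ReflTransGen StellarStep K L

/-- `Ñ(K)`: the minimum of `𝔑(L)` over subdivisions `L` of `K`. -/
noncomputable def NtildeK (K : Finset (Finset ℕ)) : ℕ :=
  sInf {n : ℕ | ∃ L, Subdivision K L ∧ n = NK L}

/-! The normalization `h` respects every facet comparison of `f`: if `σ ≺ τ` and `f σ < f τ`,
a minimizer `g` at `τ` gives `h σ ≤ g σ < g τ = h τ`; otherwise a minimizer `g` at `σ` gives
`h τ ≤ g τ ≤ g σ = h σ`. -/

section Normalization

variable [DecidableEq V] {K : Finset (Finset V)}

theorem MorseEquiv.le_iff_le {α β : Type*} [LinearOrder α] [LinearOrder β]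
    {f : Finset V → α} {g : Finset V → β} (h : MorseEquiv K f g) {σ τ : Finset V}
    (hσ : σ ∈ K) (hτ : τ ∈ K) (hστ : Facet σ τ) : f τ ≤ f σ ↔ g τ ≤ g σ := by
  simpa only [not_lt] using (h σ hσ τ hτ hστ).not

theorem IsMorse.of_morseEquiv {α β : Type*} [LinearOrder α] [LinearOrder β]
    {f : Finset V → α} {g : Finset V → β} (hf : IsMorse K f) (h : MorseEquiv K f g) :
    IsMorse K g := by
  intro σ hσ
  have hup : K.filter (fun τ => Facet σ τ ∧ g τ ≤ g σ)
      = K.filter (fun τ => Facet σ τ ∧ f τ ≤ f σ) :=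
    filter_congr fun τ hτ => and_congr_right fun hστ => (h.le_iff_le hσ hτ hστ).symm
  have hdown : K.filter (fun ν => Facet ν σ ∧ g σ ≤ g ν)
      = K.filter (fun ν => Facet ν σ ∧ f σ ≤ f ν) :=
    filter_congr fun ν hν => and_congr_right fun hνσ => (h.le_iff_le hν hσ hνσ).symm
  rw [hup, hdown]
  exact hf σ hσ

theorem morseEquiv_comp_of_strictMonoOn {α β : Type*} [LinearOrder α] [LinearOrder β]
    {f : Finset V → α} {φ : α → β} (hφ : StrictMonoOn φ (f '' K)) :
    MorseEquiv K f (φ ∘ f) := fun _ hσ _ hτ _ =>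
  (hφ.lt_iff_lt (Set.mem_image_of_mem f hσ) (Set.mem_image_of_mem f hτ)).symm

theorem Finset.strictMonoOn_card_filter_le {α : Type*} [LinearOrder α] (s : Finset α) :
    StrictMonoOn (fun x => (s.filter (· ≤ x)).card) s := by
  intro x _ y hy hxy
  refine card_lt_card ((ssubset_iff_of_subset ?_).2 ⟨y, ?_, ?_⟩)
  · exact monotone_filter_right s fun _ _ hz => hz.trans hxy.le
  · exact mem_filter.2 ⟨hy, le_rfl⟩
  · exact fun hy' => (mem_filter.1 hy').2.not_gt hxy

theorem exists_nat_isMorse_morseEquiv {α : Type*} [LinearOrder α] {f : Finset V → α}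
    (hf : IsMorse K f) : ∃ g : Finset V → ℕ, IsMorse K g ∧ MorseEquiv K f g := by
  classical
  have hequiv : MorseEquiv K f ((fun x => ((K.image f).filter (· ≤ x)).card) ∘ f) :=
    morseEquiv_comp_of_strictMonoOn <| by
      simpa only [coe_image] using (K.image f).strictMonoOn_card_filter_le
  exact ⟨_, hf.of_morseEquiv hequiv, hequiv⟩

theorem normalization_le {f : Finset V → ℝ} {g : Finset V → ℕ} (hg : IsMorse K g)
    (h : MorseEquiv K f g) (σ : Finset V) : normalization K f σ ≤ g σ :=
  Nat.sInf_le ⟨g, hg, h, rfl⟩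

theorem exists_eq_normalization {f : Finset V → ℝ} (hf : IsMorse K f) (σ : Finset V) :
    ∃ g : Finset V → ℕ, IsMorse K g ∧ MorseEquiv K f g ∧ g σ = normalization K f σ := by
  obtain ⟨g, hg, h⟩ := exists_nat_isMorse_morseEquiv hf
  exact Nat.sInf_mem (s := {n | ∃ g : Finset V → ℕ, IsMorse K g ∧ MorseEquiv K f g ∧ g σ = n})
    ⟨g σ, g, hg, h, rfl⟩

theorem morseEquiv_normalization {f : Finset V → ℝ} (hf : IsMorse K f) :
    MorseEquiv K f (normalization K f) := by
  intro σ hσ τ hτ hστ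
  constructor
  · intro hlt
    obtain ⟨g, hg, h, hgτ⟩ := exists_eq_normalization hf τ
    calc normalization K f σ ≤ g σ := normalization_le hg h σ
      _ < g τ := (h σ hσ τ hτ hστ).1 hlt
      _ = normalization K f τ := hgτ
  · intro hlt
    by_contra hle
    obtain ⟨g, hg, h, hgσ⟩ := exists_eq_normalization hf σ
    have : normalization K f τ ≤ normalization K f σ :=
      calc normalization K f τ ≤ g τ := normalization_le hg h τ
        _ ≤ g σ := (h.le_iff_le hσ hτ hστ).1 (not_lt.1 hle)
        _ = normalization K f σ := hgσ
    exact this.not_gt hlt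

end Normalization

theorem normalization_isMorse_and_equiv_general {V : Type*} [DecidableEq V]
    (K : Finset (Finset V))
    (f : Finset V → ℝ) (hf : IsMorse K f) :
    IsMorse K (normalization K f) ∧ MorseEquiv K f (normalization K f) :=
  have h := morseEquiv_normalization hf
  ⟨hf.of_morseEquiv h, h⟩

/-- The normalization `h_f` is itself a combinatorial Morse function
equivalent to `f`. -/
theorem normalization_isMorse_and_equiv {V : Type*} [DecidableEq V]
    (K : Finset (Finset V)) (hK : IsComplex K) (hconn : ComplexConnected K)
    (f : Finset V → ℝ) (hf : IsMorse K f) :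
    IsMorse K (normalization K f) ∧ MorseEquiv K f (normalization K f) :=
  normalization_isMorse_and_equiv_general K f hf
end

section
/- For a vertex v of K, h_f(v) = 0 if and only if v is a critical vertex of f (i.e., v is not matched in the gradient field: every edge e ≻ v satisfies f(e) > f(v)). -/
/-!
If some `ℕ`-valued Morse function `g` equivalent to `f` vanishes at `v`, then `g` is positive on
every edge `τ ≻ v`, because a Morse function cannot take a value `≤` all of its facets' values on a
simplex with two or more facets; hence `f v < f τ`. Conversely, lowering a critical vertex to the
minimum of `f` does not change the gradient field, and ranking each simplex by the number of
simplices of strictly smaller value yields an equivalent `ℕ`-valued Morse function vanishing at `v`.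
-/

open Finset

variable {V : Type*}

section

variable {α : Type*} [LinearOrder α] {K : Finset (Finset V)} {σ τ : Finset V}

def morseRank (K : Finset (Finset V)) (f : Finset V → α) (σ : Finset V) : ℕ :=
  #{ρ ∈ K | f ρ < f σ}

theorem morseRank_le_morseRank {f : Finset V → α} (h : f σ ≤ f τ) :
    morseRank K f σ ≤ morseRank K f τ :=
  card_le_card (monotone_filter_right K fun _ _ hρ => hρ.trans_le h)

theorem morseRank_lt_morseRank {f : Finset V → α} (hσ : σ ∈ K) (h : f σ < f τ) :
    morseRank K f σ < morseRank K f τ := by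
  refine card_lt_card ((ssubset_iff_of_subset
    (monotone_filter_right K fun _ _ hρ => hρ.trans h)).2 ⟨σ, ?_, ?_⟩)
  · exact mem_filter.2 ⟨hσ, h⟩
  · simp

theorem morseRank_eq_zero_of_forall_le {f : Finset V → α} (h : ∀ ρ ∈ K, f σ ≤ f ρ) :
    morseRank K f σ = 0 :=
  card_eq_zero.2 (filter_eq_empty_iff.2 fun ρ hρ => not_lt.2 (h ρ hρ))

end

section

variable [DecidableEq V] {α β γ : Type*} [LinearOrder α] [LinearOrder β] [LinearOrder γ]
  {K : Finset (Finset V)} {σ τ : Finset V}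

theorem Facet.ne (h : Facet σ τ) : σ ≠ τ := by
  rintro rfl
  exact absurd h.2 (by omega)

theorem not_facet_of_card_eq_one {ν : Finset V} (hν : ν.Nonempty) (hσ : σ.card = 1) :
    ¬ Facet ν σ := fun h => by
  have := h.2
  have := hν.card_pos
  omega

namespace MorseEquiv

variable {f : Finset V → α} {g : Finset V → β}

theorem trans {k : Finset V → γ} (hfg : MorseEquiv K f g) (hgk : MorseEquiv K g k) :
    MorseEquiv K f k :=
  fun σ hσ τ hτ hστ => (hfg σ hσ τ hτ hστ).trans (hgk σ hσ τ hτ hστ)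

theorem le_iff (h : MorseEquiv K f g) (hσ : σ ∈ K) (hτ : τ ∈ K) (hστ : Facet σ τ) :
    f τ ≤ f σ ↔ g τ ≤ g σ := by
  simpa only [not_lt] using (h σ hσ τ hτ hστ).not

theorem isMorse (h : MorseEquiv K f g) (hf : IsMorse K f) : IsMorse K g := by
  intro σ hσ
  have hup : K.filter (fun τ => Facet σ τ ∧ g τ ≤ g σ) =
      K.filter (fun τ => Facet σ τ ∧ f τ ≤ f σ) :=
    filter_congr fun τ hτ => and_congr_right fun hστ => (h.le_iff hσ hτ hστ).symm
  have hdown : K.filter (fun ν => Facet ν σ ∧ g σ ≤ g ν) =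
      K.filter (fun ν => Facet ν σ ∧ f σ ≤ f ν) :=
    filter_congr fun ν hν => and_congr_right fun hνσ => (h.le_iff hν hσ hνσ).symm
  rw [hup, hdown]
  exact hf σ hσ

end MorseEquiv

theorem morseEquiv_update {f : Finset V → α} {c : α}
    (hup : ∀ τ ∈ K, Facet σ τ → f σ < f τ) (hdown : ∀ ν ∈ K, Facet ν σ → f ν < c)
    (hc : c ≤ f σ) : MorseEquiv K f (Function.update f σ c) := by
  intro ν hν τ hτ hντ
  rcases eq_or_ne ν σ with rfl | hνσ
  · rw [Function.update_self, Function.update_of_ne hντ.ne.symm]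
    have hlt := hup τ hτ hντ
    exact iff_of_true hlt (hc.trans_lt hlt)
  rcases eq_or_ne τ σ with rfl | hτσ
  · rw [Function.update_self, Function.update_of_ne hνσ]
    have hlt := hdown ν hν hντ
    exact iff_of_true (hlt.trans_le hc) hlt
  · rw [Function.update_of_ne hνσ, Function.update_of_ne hτσ]

theorem IsMorse.exists_facet_lt {g : Finset V → α} (hK : IsComplex K) (hg : IsMorse K g)
    (hτ : τ ∈ K) (hcard : 1 < τ.card) : ∃ ν ∈ K, Facet ν τ ∧ g ν < g τ := by
  by_contra! hle
  have herase : ∀ x ∈ τ, τ.erase x ∈ K.filter (fun ν => Facet ν τ ∧ g τ ≤ g ν) := by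
    intro x hx
    have hxK : τ.erase x ∈ K := hK.2 τ hτ _ (erase_subset x τ)
      ((erase_nonempty hx).2 (one_lt_card_iff_nontrivial.1 hcard))
    have hxF : Facet (τ.erase x) τ := ⟨erase_subset x τ, card_erase_add_one hx⟩
    exact mem_filter.2 ⟨hxK, hxF, hle _ hxK hxF⟩
  obtain ⟨a, ha, b, hb, hab⟩ := one_lt_card.1 hcard
  exact hab ((erase_inj τ ha).1 (card_le_one.1 (hg τ hτ).2 _ (herase a ha) _ (herase b hb)))

theorem morseEquiv_morseRank (K : Finset (Finset V)) (f : Finset V → α) :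
    MorseEquiv K f (morseRank K f) :=
  fun _ hσ _ _ _ => ⟨morseRank_lt_morseRank hσ,
    fun h => not_le.1 fun hle => (morseRank_le_morseRank hle).not_gt h⟩

theorem normalization_eq_zero_iff_exists {f : Finset V → ℝ} (hf : IsMorse K f) :
    normalization K f σ = 0 ↔
      ∃ g : Finset V → ℕ, IsMorse K g ∧ MorseEquiv K f g ∧ g σ = 0 := by
  have hne : {n : ℕ | ∃ g : Finset V → ℕ, IsMorse K g ∧ MorseEquiv K f g ∧ g σ = n}.Nonempty :=
    ⟨_, morseRank K f, (morseEquiv_morseRank K f).isMorse hf, morseEquiv_morseRank K f, rfl⟩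
  rw [normalization, Nat.sInf_eq_zero, or_iff_left hne.ne_empty]
  rfl

theorem lt_of_normalization_eq_zero {f : Finset V → ℝ} (hK : IsComplex K) (hf : IsMorse K f)
    (hσ : σ ∈ K) (h0 : normalization K f σ = 0) (hτ : τ ∈ K) (hστ : Facet σ τ) :
    f σ < f τ := by
  obtain ⟨g, hg, hfg, hgσ⟩ := (normalization_eq_zero_iff_exists hf).1 h0
  have hcard : 1 < τ.card := by
    have := hστ.2
    have := (hK.1 σ hσ).card_pos
    omega
  obtain ⟨ν, -, -, hν⟩ := hg.exists_facet_lt hK hτ hcard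
  exact (hfg σ hσ τ hτ hστ).2 (by omega)

theorem normalization_eq_zero_of_forall_not_facet {f : Finset V → ℝ} (hf : IsMorse K f)
    (hσ : σ ∈ K) (hup : ∀ τ ∈ K, Facet σ τ → f σ < f τ) (hdown : ∀ ν ∈ K, ¬ Facet ν σ) :
    normalization K f σ = 0 := by
  obtain ⟨m, hm⟩ : ∃ m, ∀ ρ ∈ K, m ≤ f ρ := ⟨K.inf' ⟨σ, hσ⟩ f, fun ρ hρ => inf'_le f hρ⟩
  have hlower : MorseEquiv K f (Function.update f σ m) :=
    morseEquiv_update hup (fun ν hν h => absurd h (hdown ν hν)) (hm σ hσ)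
  have hmin : ∀ ρ ∈ K, Function.update f σ m σ ≤ Function.update f σ m ρ := by
    intro ρ hρ
    rcases eq_or_ne ρ σ with rfl | hρσ
    · exact le_rfl
    · rw [Function.update_self, Function.update_of_ne hρσ]
      exact hm ρ hρ
  have hrank := hlower.trans (morseEquiv_morseRank K (Function.update f σ m))
  exact (normalization_eq_zero_iff_exists hf).2
    ⟨_, hrank.isMorse hf, hrank, morseRank_eq_zero_of_forall_le hmin⟩

end

theorem normalization_eq_zero_iff_criticalVertex_general {V : Type*} [DecidableEq V]
    (K : Finset (Finset V)) (hK : IsComplex K)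
    (f : Finset V → ℝ) (hf : IsMorse K f)
    (v : Finset V) (hv : v ∈ K) (hcard : v.card = 1) :
    normalization K f v = 0 ↔ IsCritical K f v := by
  have hdown : ∀ ν ∈ K, ¬ Facet ν v := fun ν hν => not_facet_of_card_eq_one (hK.1 ν hν) hcard
  constructor
  · intro h0
    exact ⟨hv, fun τ hτ => lt_of_normalization_eq_zero hK hf hv h0 hτ,
      fun ν hν h => absurd h (hdown ν hν)⟩
  · intro hcrit
    exact normalization_eq_zero_of_forall_not_facet hf hv hcrit.2.1 hdown

/-- For a vertex `v`, `h_f(v) = 0` iff `v` is a critical vertex of `f`. -/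
theorem normalization_eq_zero_iff_criticalVertex {V : Type*} [DecidableEq V]
    (K : Finset (Finset V)) (hK : IsComplex K) (hconn : ComplexConnected K)
    (f : Finset V → ℝ) (hf : IsMorse K f)
    (v : Finset V) (hv : v ∈ K) (hcard : v.card = 1) :
    normalization K f v = 0 ↔ IsCritical K f v :=
  normalization_eq_zero_iff_criticalVertex_general K hK f hf v hv hcard
end

section
/- Let L be a finite connected 2-dimensional simplicial complex with H₂(L; ℝ) = 0, let f be a discrete Morse function on L, and form the bipartite graph G on the critical 1-simplices A and critical 2-simplices B of f, joining e ∈ A to σ ∈ B whenever there is a gradient path from an immediate face of σ to e. Then G admits a matching saturating B. -/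
open Finset

variable {V : Type*}

/-!
For every critical triangle `τ`, recursion along `f` builds a 2-chain playing the role of
Forman's stabilised flow `Φ^∞ τ`: its boundary vanishes on edges paired upwards, and on a
critical edge `e` it is non-zero only if a gradient path runs from a facet of `τ` to `e`.
If a set `S` of critical triangles reached fewer than `|S|` critical edges, a non-trivial
combination of these chains would have boundary vanishing on all critical and all
upward-paired edges. Gradient paths admit no closed loops, so the whole boundary then vanishes,
and the combination is a non-zero 2-cycle, against `H₂(L; ℝ) = 0`. Hall's marriage theorem
turns this counting condition into the matching.
-/

theorem card_filter_lt_lt_of_lt {α β : Type*} [LinearOrder β] (s : Finset α) (g : α → β)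
    {a b : α} (ha : a ∈ s) (hab : g a < g b) :
    #(s.filter (g · < g a)) < #(s.filter (g · < g b)) := by
  refine card_lt_card ((ssubset_iff_of_subset ?_).mpr ⟨a, ?_, ?_⟩)
  · exact fun x hx => mem_filter.mpr ⟨(mem_filter.mp hx).1, (mem_filter.mp hx).2.trans hab⟩
  · exact mem_filter.mpr ⟨ha, hab⟩
  · simp

section GradientPairs

variable [DecidableEq V] {L : Finset (Finset V)} {f : Finset V → ℝ}

theorem IsMorse.gradPair_right_unique (hf : IsMorse L f) {σ τ₁ τ₂ : Finset V}
    (h₁ : GradPair L f σ τ₁) (h₂ : GradPair L f σ τ₂) : τ₁ = τ₂ :=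
  card_le_one.mp (hf σ h₁.1).1 _ (mem_filter.mpr ⟨h₁.2.1, h₁.2.2⟩)
    _ (mem_filter.mpr ⟨h₂.2.1, h₂.2.2⟩)

theorem IsMorse.gradPair_left_unique (hf : IsMorse L f) {σ₁ σ₂ τ : Finset V}
    (h₁ : GradPair L f σ₁ τ) (h₂ : GradPair L f σ₂ τ) : σ₁ = σ₂ :=
  card_le_one.mp (hf τ h₁.2.1).2 _ (mem_filter.mpr ⟨h₁.1, h₁.2.2⟩)
    _ (mem_filter.mpr ⟨h₂.1, h₂.2.2⟩)

theorem IsCritical.not_gradPair_right {σ τ : Finset V} (hτ : IsCritical L f τ) :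
    ¬GradPair L f σ τ := fun h => (hτ.2.2 σ h.1 h.2.2.1).not_ge h.2.2.2

theorem exists_gradPair_of_not_isCritical {σ : Finset V} (hσ : σ ∈ L)
    (h : ¬IsCritical L f σ) : (∃ τ, GradPair L f σ τ) ∨ ∃ ν, GradPair L f ν σ := by
  simp only [IsCritical, hσ, true_and, not_and_or, not_forall, not_lt] at h
  rcases h with ⟨τ, hτ, hστ, hle⟩ | ⟨ν, hν, hνσ, hle⟩
  · exact Or.inl ⟨τ, hσ, hτ, hστ, hle⟩
  · exact Or.inr ⟨ν, hν, hσ, hνσ, hle⟩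

/-- Adjacency in the bipartite graph `G` of the theorem. -/
def GPathReach (L : Finset (Finset V)) (f : Finset V → ℝ) (σ e : Finset V) : Prop :=
  ∃ σ' p, σ' ∈ L ∧ Facet σ' σ ∧ GPath L f σ' e p

theorem gPathReach_of_facet {σ e : Finset V} (he : e ∈ L) (heσ : Facet e σ) :
    GPathReach L f σ e :=
  ⟨e, [e], he, heσ, GPath.nil e he⟩

theorem GPathReach.of_gradPair {σ τ e' e : Finset V} (hpair : GradPair L f e' τ)
    (he'σ : Facet e' σ) (h : GPathReach L f τ e) : GPathReach L f σ e := by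
  obtain ⟨σ', p, hσ', hσ'τ, hp⟩ := h
  obtain ⟨he', hτ, he'τ, hle⟩ := hpair
  by_cases heq : σ' = e'
  · exact ⟨σ', p, hσ', heq ▸ he'σ, hp⟩
  · exact ⟨e', e' :: τ :: p, he', he'σ, GPath.cons e' τ σ' e p he' hτ he'τ hle hσ'τ heq hp⟩

theorem GPath.card_eq {σ e : Finset V} {p : List (Finset V)} (h : GPath L f σ e p) :
    #e = #σ := by
  induction h with
  | nil => rfl
  | cons σ τ σ' e l _ _ hστ _ hσ'τ _ _ ih => rw [ih]; have := hστ.2; have := hσ'τ.2; omega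

theorem GPathReach.card_add_one {σ e : Finset V} (h : GPathReach L f σ e) : #e + 1 = #σ := by
  obtain ⟨σ', p, -, hσ'σ, hp⟩ := h
  rw [hp.card_eq, hσ'σ.2]

end GradientPairs

section Boundary

variable [DecidableEq V] [LinearOrder V] {L : Finset (Finset V)}

theorem bsign_of_not_facet {ν τ : Finset V} (h : ¬Facet ν τ) : bsign ν τ = 0 := by
  simp [bsign, h]

theorem bsign_insert {ν : Finset V} {x : V} (hx : x ∉ ν) :
    bsign ν (insert x ν) = (-1) ^ #(ν.filter (· < x)) := by
  have hfacet : Facet ν (insert x ν) := exists_eq_insert_iff.mp ⟨x, hx, rfl⟩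
  rw [bsign, if_pos hfacet, insert_sdiff_cancel hx, sum_singleton, filter_insert,
    if_neg (lt_irrefl x)]

theorem bsign_ne_zero {ν τ : Finset V} (h : Facet ν τ) : bsign ν τ ≠ 0 := by
  obtain ⟨x, hx, rfl⟩ := exists_eq_insert_iff.mpr h
  rw [bsign_insert hx]
  exact pow_ne_zero _ (by norm_num)

theorem card_filter_insert_lt {s : Finset V} {x : V} (hx : x ∉ s) (y : V) :
    #((insert x s).filter (· < y)) = #(s.filter (· < y)) + if x < y then 1 else 0 := by
  rw [filter_insert]
  split_ifs
  · exact card_insert_of_notMem (fun h => hx (mem_filter.mp h).1)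
  · rfl

theorem bsign_mul_bsign_add_swap {ν : Finset V} {x y : V} (hx : x ∉ ν) (hy : y ∉ ν)
    (hxy : x ≠ y) :
    bsign ν (insert x ν) * bsign (insert x ν) (insert y (insert x ν)) +
      bsign ν (insert y ν) * bsign (insert y ν) (insert x (insert y ν)) = 0 := by
  rw [bsign_insert hx, bsign_insert hy, bsign_insert (by simp [hxy.symm, hy]),
    bsign_insert (by simp [hxy, hx]), card_filter_insert_lt hx, card_filter_insert_lt hy]
  rcases hxy.lt_or_gt with h | h
  · simp only [if_pos h, if_neg h.not_gt]; ring
  · simp only [if_pos h, if_neg h.not_gt]; ring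

theorem sum_bsign_mul_bsign (hL : IsComplex L) {τ : Finset V} (hτ : τ ∈ L) (ν : Finset V) :
    ∑ e ∈ L, bsign ν e * bsign e τ = 0 := by
  by_cases hmid : ∀ e, Facet ν e → ¬Facet e τ
  · refine sum_eq_zero fun e _ => ?_
    by_cases h : Facet ν e
    · rw [bsign_of_not_facet (hmid e h), mul_zero]
    · rw [bsign_of_not_facet h, zero_mul]
  push Not at hmid
  obtain ⟨e, hνe, heτ⟩ := hmid
  obtain ⟨x, hx, rfl⟩ := exists_eq_insert_iff.mpr hνe
  obtain ⟨y, hy, rfl⟩ := exists_eq_insert_iff.mpr heτ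
  obtain ⟨hyx, hyν⟩ : y ≠ x ∧ y ∉ ν := by simpa using hy
  have hsub : ({insert x ν, insert y ν} : Finset (Finset V)) ⊆ L := by
    refine insert_subset_iff.mpr ⟨hL.2 _ hτ _ (subset_insert _ _) (insert_nonempty _ _), ?_⟩
    refine singleton_subset_iff.mpr (hL.2 _ hτ _ ?_ (insert_nonempty _ _))
    exact insert_subset (mem_insert_self _ _) ((subset_insert _ _).trans (subset_insert _ _))
  have hne : insert x ν ≠ insert y ν := fun h => hy (h ▸ mem_insert_self y ν)
  rw [← sum_subset hsub, sum_pair hne]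
  · simpa only [insert_comm x y] using bsign_mul_bsign_add_swap hx hyν hyx.symm
  intro e _ he
  by_cases hνe : Facet ν e
  · obtain ⟨z, hz, rfl⟩ := exists_eq_insert_iff.mpr hνe
    have hzτ : ¬Facet (insert z ν) (insert y (insert x ν)) := by
      rintro ⟨hsub, -⟩
      have : z = y ∨ z = x := by simpa [hz] using hsub (mem_insert_self z ν)
      rcases this with rfl | rfl <;> simp at he
    rw [bsign_of_not_facet hzτ, mul_zero]
  · rw [bsign_of_not_facet hνe, zero_mul]

theorem bnd_bnd (hL : IsComplex L) (c : Finset V → ℝ) (ν : Finset V) :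
    bnd L (bnd L c) ν = 0 := by
  simp only [bnd, mul_sum]
  rw [sum_comm]
  refine sum_eq_zero fun τ hτ => ?_
  simp only [← mul_assoc, ← sum_mul, sum_bsign_mul_bsign hL hτ ν, zero_mul]

end Boundary

section Chains

variable [DecidableEq V] [LinearOrder V] {L : Finset (Finset V)} {f : Finset V → ℝ}

theorem bnd_add (c d : Finset V → ℝ) (ν : Finset V) :
    bnd L (c + d) ν = bnd L c ν + bnd L d ν := by
  simp only [bnd, Pi.add_apply, mul_add, sum_add_distrib]

theorem bnd_smul (r : ℝ) (c : Finset V → ℝ) (ν : Finset V) :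
    bnd L (r • c) ν = r * bnd L c ν := by
  simp only [bnd, Pi.smul_apply, smul_eq_mul, mul_sum, mul_left_comm]

theorem bnd_sum {ι : Type*} (s : Finset ι) (c : ι → Finset V → ℝ) (ν : Finset V) :
    bnd L (∑ i ∈ s, c i) ν = ∑ i ∈ s, bnd L (c i) ν := by
  simp only [bnd, Finset.sum_apply, mul_sum]
  exact sum_comm

theorem bnd_single {τ : Finset V} (hτ : τ ∈ L) (ν : Finset V) :
    bnd L (Pi.single τ 1) ν = bsign ν τ := by
  simp only [bnd, Pi.single_apply, mul_ite, mul_one, mul_zero, sum_ite_eq', if_pos hτ]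

theorem mem_of_bnd_ne_zero (hL : IsComplex L) {k : ℕ} {c : Finset V → ℝ}
    (hc : IsChainOf L (k + 1) c) {e : Finset V} (he : bnd L c e ≠ 0) : e ∈ L := by
  obtain ⟨τ, -, hτ⟩ := exists_ne_zero_of_sum_ne_zero he
  have heτ : Facet e τ := by_contra fun h => hτ (by rw [bsign_of_not_facet h, zero_mul])
  obtain ⟨hτL, hτk⟩ := hc τ (right_ne_zero_of_mul hτ)
  exact hL.2 τ hτL e heτ.1 (card_pos.mp (by have := heτ.2; omega))

/-- At the vertex `ν` of highest value paired with an edge of the boundary, `∂∂ = 0` has a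
single non-zero term. -/
theorem bnd_eq_zero_of_exists_gradPair (hL : IsComplex L) (hf : IsMorse L f)
    {c : Finset V → ℝ} (h : ∀ e, bnd L c e ≠ 0 → ∃ ν, GradPair L f ν e) (e : Finset V) :
    bnd L c e = 0 := by
  classical
  by_contra he
  set P := (L ×ˢ L).filter fun q => GradPair L f q.1 q.2 ∧ bnd L c q.2 ≠ 0
  have hP : ∀ {ν e}, GradPair L f ν e → bnd L c e ≠ 0 → (ν, e) ∈ P := fun hp hb =>
    mem_filter.mpr ⟨mem_product.mpr ⟨hp.1, hp.2.1⟩, hp, hb⟩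
  obtain ⟨ν₀, hν₀⟩ := h e he
  obtain ⟨⟨ν, e₀⟩, hq, hmax⟩ := exists_max_image P (fun q => f q.1) ⟨_, hP hν₀ he⟩
  obtain ⟨-, hpair, hb⟩ := mem_filter.mp hq
  have hdd : ∑ e ∈ L, bsign ν e * bnd L c e = 0 := bnd_bnd hL c ν
  rw [sum_eq_single_of_mem e₀ hpair.2.1 ?_] at hdd
  · exact mul_ne_zero (bsign_ne_zero hpair.2.2.1) hb hdd
  intro e' he' hne
  by_cases hb' : bnd L c e' = 0
  · rw [hb', mul_zero]
  by_cases hfacet : Facet ν e'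
  · obtain ⟨ν', hν'⟩ := h e' hb'
    have hν'ν : f ν' ≤ f ν := hmax _ (hP hν' hb')
    have hle : f e' ≤ f ν := hν'.2.2.2.trans hν'ν
    exact absurd (hf.gradPair_right_unique ⟨hpair.1, he', hfacet, hle⟩ hpair) hne
  · rw [bsign_of_not_facet hfacet, zero_mul]

theorem eq_zero_of_bnd_eq_zero_of_isCritical (hL : IsComplex L) (hf : IsMorse L f)
    (hH2 : H2Zero L) {c : Finset V → ℝ} (hc : IsChainOf L 2 c)
    (hpaired : ∀ e σ, GradPair L f e σ → bnd L c e = 0)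
    (hcrit : ∀ e, IsCritical L f e → bnd L c e = 0) (σ : Finset V) : c σ = 0 := by
  refine hH2 c hc (bnd_eq_zero_of_exists_gradPair hL hf fun e he => ?_) σ
  rcases exists_gradPair_of_not_isCritical (mem_of_bnd_ne_zero hL hc he)
    (fun h => he (hcrit e h)) with ⟨σ, hσ⟩ | hν
  · exact absurd (hpaired e σ hσ) he
  · exact hν

end Chains

section FlowChains

variable [DecidableEq V] {L : Finset (Finset V)} {f : Finset V → ℝ}

open scoped Classical in
/-- `(e, t)`: the gradient flow out of `τ` crosses its facet `e` into the triangle `t`. -/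
noncomputable def flowPairs (L : Finset (Finset V)) (f : Finset V → ℝ) (τ : Finset V) :
    Finset (Finset V × Finset V) :=
  {p ∈ L ×ˢ L | GradPair L f p.1 p.2 ∧ Facet p.1 τ ∧ p.2 ≠ τ}

theorem mem_flowPairs {τ : Finset V} {p : Finset V × Finset V} :
    p ∈ flowPairs L f τ ↔ GradPair L f p.1 p.2 ∧ Facet p.1 τ ∧ p.2 ≠ τ := by
  simp only [flowPairs, mem_filter, mem_product, and_iff_right_iff_imp]
  exact fun h => ⟨h.1.1, h.1.2.1⟩

theorem lt_of_mem_flowPairs (hf : IsMorse L f) {τ : Finset V} (hτ : τ ∈ L)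
    {p : Finset V × Finset V} (hp : p ∈ flowPairs L f τ) : f p.2 < f τ := by
  obtain ⟨hpair, hfacet, hne⟩ := mem_flowPairs.mp hp
  by_contra! hle
  exact hne (hf.gradPair_right_unique hpair ⟨hpair.1, hτ, hfacet, hle.trans hpair.2.2.2⟩)

theorem card_of_mem_flowPairs {τ : Finset V} {p : Finset V × Finset V}
    (hp : p ∈ flowPairs L f τ) : #p.2 = #τ := by
  obtain ⟨hpair, hfacet, -⟩ := mem_flowPairs.mp hp
  rw [← hpair.2.2.1.2, hfacet.2]

variable [LinearOrder V]

/-- The properties of Forman's stabilised flow `Φ^∞ τ` of a triangle `τ` (whose boundary, read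
on critical edges, is the Morse-complex boundary of `τ`) that the matching argument needs. -/
structure IsFlowChain (L : Finset (Finset V)) (f : Finset V → ℝ) (τ : Finset V)
    (c : Finset V → ℝ) : Prop where
  isChainOf : IsChainOf L 2 c
  apply_self : c τ = 1
  support : ∀ x, c x ≠ 0 → x = τ ∨ (f x < f τ ∧ ¬IsCritical L f x)
  bnd_of_gradPair_ne : ∀ e ρ, GradPair L f e ρ → ρ ≠ τ → bnd L c e = 0
  bnd_of_gradPair : ∀ e, GradPair L f e τ → bnd L c e = bsign e τ
  gPathReach : ∀ e, IsCritical L f e → bnd L c e ≠ 0 → GPathReach L f τ e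

/-- `τ` plus multiples of the flow chains `d t`, `(e, t) ∈ flowPairs L f τ`, chosen to cancel
the boundary on each such `e`. -/
noncomputable def flowStep (L : Finset (Finset V)) (f : Finset V → ℝ) (τ : Finset V)
    (d : Finset V → Finset V → ℝ) : Finset V → ℝ :=
  Pi.single τ 1 + ∑ p ∈ flowPairs L f τ, (-(bsign p.1 τ / bsign p.1 p.2)) • d p.2

theorem flowStep_apply (τ : Finset V) (d : Finset V → Finset V → ℝ) (x : Finset V) :
    flowStep L f τ d x =
      (Pi.single τ 1 : Finset V → ℝ) x +
        ∑ p ∈ flowPairs L f τ, -(bsign p.1 τ / bsign p.1 p.2) * d p.2 x := by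
  simp only [flowStep, Pi.add_apply, Finset.sum_apply, Pi.smul_apply, smul_eq_mul]

theorem bnd_flowStep {τ : Finset V} (hτ : τ ∈ L) (d : Finset V → Finset V → ℝ) (e : Finset V) :
    bnd L (flowStep L f τ d) e =
      bsign e τ + ∑ p ∈ flowPairs L f τ, -(bsign p.1 τ / bsign p.1 p.2) * bnd L (d p.2) e := by
  simp only [flowStep, bnd_add, bnd_single hτ, bnd_sum, bnd_smul]

variable {τ : Finset V} {d : Finset V → Finset V → ℝ}

theorem bnd_flowStep_of_gradPair_ne (hf : IsMorse L f) (hτ : τ ∈ L)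
    (hd : ∀ p ∈ flowPairs L f τ, IsFlowChain L f p.2 (d p.2)) {e ρ : Finset V}
    (he : GradPair L f e ρ) (hρ : ρ ≠ τ) : bnd L (flowStep L f τ d) e = 0 := by
  have hvanish : ∀ p ∈ flowPairs L f τ, p ≠ (e, ρ) →
      -(bsign p.1 τ / bsign p.1 p.2) * bnd L (d p.2) e = 0 := by
    intro p hp hne
    have hρp : ρ ≠ p.2 := by
      rintro rfl
      exact hne (Prod.ext (hf.gradPair_left_unique (mem_flowPairs.mp hp).1 he) rfl)
    rw [(hd p hp).bnd_of_gradPair_ne e ρ he hρp, mul_zero]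
  rw [bnd_flowStep hτ]
  by_cases heτ : Facet e τ
  · have hmem : (e, ρ) ∈ flowPairs L f τ := mem_flowPairs.mpr ⟨he, heτ, hρ⟩
    rw [sum_eq_single_of_mem _ hmem hvanish, (hd _ hmem).bnd_of_gradPair e he,
      neg_mul, div_mul_cancel₀ _ (bsign_ne_zero he.2.2.1), add_neg_cancel]
  · rw [bsign_of_not_facet heτ, zero_add]
    refine sum_eq_zero fun p hp => hvanish p hp fun h => heτ ?_
    simpa [h] using (mem_flowPairs.mp hp).2.1

theorem isFlowChain_flowStep (hf : IsMorse L f) (hτ : τ ∈ L) (hτ3 : #τ = 3)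
    (hd : ∀ p ∈ flowPairs L f τ, IsFlowChain L f p.2 (d p.2)) :
    IsFlowChain L f τ (flowStep L f τ d) := by
  have hsum : ∀ x, x ≠ τ → flowStep L f τ d x ≠ 0 →
      ∃ p ∈ flowPairs L f τ, d p.2 x ≠ 0 ∧ (x = p.2 ∨ f x < f p.2 ∧ ¬IsCritical L f x) := by
    intro x hx h
    rw [flowStep_apply, Pi.single_eq_of_ne hx, zero_add] at h
    obtain ⟨p, hp, hpx⟩ := exists_ne_zero_of_sum_ne_zero h
    exact ⟨p, hp, right_ne_zero_of_mul hpx, (hd p hp).support x (right_ne_zero_of_mul hpx)⟩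
  refine ⟨fun x hx => ?_, ?_, fun x hx => ?_, fun e ρ he hρ => ?_, fun e he => ?_,
    fun e he hb => ?_⟩
  · by_cases hxτ : x = τ
    · exact hxτ ▸ ⟨hτ, hτ3⟩
    obtain ⟨p, hp, hpx, -⟩ := hsum x hxτ hx
    exact (hd p hp).isChainOf x hpx
  · rw [flowStep_apply, Pi.single_eq_same, sum_eq_zero, add_zero]
    intro p hp
    have hpτ : d p.2 τ = 0 := by
      by_contra h
      rcases (hd p hp).support τ h with h' | h'
      · exact (mem_flowPairs.mp hp).2.2 h'.symm
      · exact lt_asymm h'.1 (lt_of_mem_flowPairs hf hτ hp)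
    rw [hpτ, mul_zero]
  · by_cases hxτ : x = τ
    · exact Or.inl hxτ
    obtain ⟨p, hp, -, rfl | ⟨hxp, hxcrit⟩⟩ := hsum x hxτ hx
    · exact Or.inr ⟨lt_of_mem_flowPairs hf hτ hp,
        fun h => h.not_gradPair_right (mem_flowPairs.mp hp).1⟩
    · exact Or.inr ⟨hxp.trans (lt_of_mem_flowPairs hf hτ hp), hxcrit⟩
  · exact bnd_flowStep_of_gradPair_ne hf hτ hd he hρ
  · rw [bnd_flowStep hτ, sum_eq_zero, add_zero]
    exact fun p hp => by
      rw [(hd p hp).bnd_of_gradPair_ne e τ he (mem_flowPairs.mp hp).2.2.symm, mul_zero]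
  · by_cases heτ : Facet e τ
    · exact gPathReach_of_facet he.1 heτ
    rw [bnd_flowStep hτ, bsign_of_not_facet heτ, zero_add] at hb
    obtain ⟨p, hp, hpe⟩ := exists_ne_zero_of_sum_ne_zero hb
    obtain ⟨hpair, hpτ, -⟩ := mem_flowPairs.mp hp
    exact ((hd p hp).gPathReach e he (right_ne_zero_of_mul hpe)).of_gradPair hpair hpτ

theorem exists_isFlowChain (hf : IsMorse L f) {τ : Finset V} (hτ : τ ∈ L) (hτ3 : #τ = 3) :
    ∃ c, IsFlowChain L f τ c := by
  have IH : ∀ t ∈ L, #t = 3 → f t < f τ → ∃ c, IsFlowChain L f t c :=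
    fun t ht ht3 _ => exists_isFlowChain hf ht ht3
  choose! d hd using IH
  refine ⟨flowStep L f τ d, isFlowChain_flowStep hf hτ hτ3 fun p hp => hd _ ?_ ?_ ?_⟩
  · exact (mem_flowPairs.mp hp).1.2.1
  · rw [card_of_mem_flowPairs hp, hτ3]
  · exact lt_of_mem_flowPairs hf hτ hp
termination_by #(L.filter (f · < f τ))
decreasing_by exact card_filter_lt_lt_of_lt L f ‹_› ‹_›

end FlowChains

section Matching

variable [DecidableEq V] [LinearOrder V] {L : Finset (Finset V)} {f : Finset V → ℝ}

theorem IsFlowChain.apply_eq_zero_of_isCritical {τ : Finset V} {c : Finset V → ℝ}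
    (hc : IsFlowChain L f τ c) {x : Finset V} (hx : IsCritical L f x) (hxτ : x ≠ τ) :
    c x = 0 := by
  by_contra h
  rcases hc.support x h with h' | h'
  · exact hxτ h'
  · exact h'.2 hx

theorem linearIndependent_bnd_isFlowChain (hL : IsComplex L) (hf : IsMorse L f)
    (hH2 : H2Zero L) {ι : Type*} [Fintype ι] {σ : ι → Finset V} (hσ : Function.Injective σ)
    (hcrit : ∀ i, IsCritical L f (σ i)) {c : ι → Finset V → ℝ}
    (hc : ∀ i, IsFlowChain L f (σ i) (c i)) (W : Finset (Finset V))
    (hW : ∀ i e, IsCritical L f e → GPathReach L f (σ i) e → e ∈ W) :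
    LinearIndependent ℝ fun i (e : W) => bnd L (c i) e := by
  rw [Fintype.linearIndependent_iff]
  intro g hg
  have hbnd : ∀ e, bnd L (∑ i, g i • c i) e = ∑ i, g i * bnd L (c i) e := by
    simp only [bnd_sum, bnd_smul, implies_true]
  have hzero := eq_zero_of_bnd_eq_zero_of_isCritical hL hf hH2 (c := ∑ i, g i • c i)
    (fun x hx => ?chain) (fun e ρ he => ?paired) (fun e he => ?critical)
  case chain =>
    simp only [Finset.sum_apply, Pi.smul_apply, smul_eq_mul] at hx
    obtain ⟨i, -, hi⟩ := exists_ne_zero_of_sum_ne_zero hx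
    exact (hc i).isChainOf x (right_ne_zero_of_mul hi)
  case paired =>
    rw [hbnd]
    refine sum_eq_zero fun i _ => ?_
    rw [(hc i).bnd_of_gradPair_ne e ρ he fun h => (hcrit i).not_gradPair_right (h ▸ he),
      mul_zero]
  case critical =>
    rw [hbnd]
    by_cases heW : e ∈ W
    · simpa using congrFun hg ⟨e, heW⟩
    refine sum_eq_zero fun i _ => ?_
    by_contra h
    exact heW (hW i e he ((hc i).gPathReach e he (right_ne_zero_of_mul h)))
  intro j
  have hj := hzero (σ j)
  rwa [Finset.sum_apply, sum_eq_single j, Pi.smul_apply, (hc j).apply_self, smul_eq_mul,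
    mul_one] at hj
  · intro i _ hij
    rw [Pi.smul_apply, (hc i).apply_eq_zero_of_isCritical (hcrit j) (hσ.ne hij.symm),
      smul_zero]
  · simp

end Matching

theorem matching_saturating_critical_two_simplices_general {V : Type*} [DecidableEq V] [LinearOrder V]
    (L : Finset (Finset V)) (hL : IsComplex L)
    (hH2 : H2Zero L)
    (f : Finset V → ℝ) (hf : IsMorse L f) :
    ∃ m : Finset V → Finset V,
      Set.InjOn m ↑(L.filter (fun σ => IsCritical L f σ ∧ σ.card = 3)) ∧
      ∀ σ ∈ L.filter (fun σ => IsCritical L f σ ∧ σ.card = 3),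
        m σ ∈ L.filter (fun e => IsCritical L f e ∧ e.card = 2) ∧
        ∃ (σ' : Finset V) (p : List (Finset V)),
          σ' ∈ L ∧ Facet σ' σ ∧ GPath L f σ' (m σ) p := by
  classical
  set B := L.filter (fun σ => IsCritical L f σ ∧ σ.card = 3)
  set A := L.filter (fun e => IsCritical L f e ∧ e.card = 2)
  have hB : ∀ σ ∈ B, IsCritical L f σ ∧ #σ = 3 := fun σ h => (mem_filter.mp h).2
  choose! c hc using fun σ (hσ : σ ∈ B) => exists_isFlowChain hf (hB σ hσ).1.1 (hB σ hσ).2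
  have hA : ∀ σ ∈ B, ∀ e, IsCritical L f e → GPathReach L f σ e → e ∈ A := by
    intro σ hσ e he hreach
    have := hreach.card_add_one
    exact mem_filter.mpr ⟨he.1, he, by rw [(hB σ hσ).2] at this; omega⟩
  let N : B → Finset (Finset V) := fun σ => A.filter (GPathReach L f σ)
  have hall : ∀ s : Finset B, #s ≤ #(s.biUnion N) := fun s => by
    have hindep := linearIndependent_bnd_isFlowChain hL hf hH2 (σ := fun i : s => i.1.1)
      (Subtype.val_injective.comp Subtype.val_injective) (fun i => (hB _ i.1.2).1)
      (fun i => hc _ i.1.2) (s.biUnion N) fun i e he hreach =>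
        mem_biUnion.mpr ⟨i.1, i.2, mem_filter.mpr ⟨hA _ i.1.2 e he hreach, hreach⟩⟩
    simpa using hindep.fintype_card_le_finrank
  obtain ⟨m, hinj, hm⟩ := (all_card_le_biUnion_card_iff_existsInjective' N).mp hall
  refine ⟨fun x => if h : x ∈ B then m ⟨x, h⟩ else ∅, fun x hx y hy hxy => ?_, fun σ hσ => ?_⟩
  · simp only [dif_pos (mem_coe.mp hx), dif_pos (mem_coe.mp hy)] at hxy
    exact congrArg Subtype.val (hinj hxy)
  · simp only [dif_pos hσ]
    exact mem_filter.mp (hm ⟨σ, hσ⟩)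

/-- For a finite connected 2-complex with `H₂(L;ℝ) = 0`, the bipartite graph
joining critical edges to critical 2-simplices through gradient paths admits a matching
saturating the critical 2-simplices. -/
theorem matching_saturating_critical_two_simplices {V : Type*} [DecidableEq V] [LinearOrder V]
    (L : Finset (Finset V)) (hL : IsComplex L) (hconn : ComplexConnected L)
    (hdim : ∀ σ ∈ L, σ.card ≤ 3) (hH2 : H2Zero L)
    (f : Finset V → ℝ) (hf : IsMorse L f) :
    ∃ m : Finset V → Finset V,
      Set.InjOn m ↑(L.filter (fun σ => IsCritical L f σ ∧ σ.card = 3)) ∧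
      ∀ σ ∈ L.filter (fun σ => IsCritical L f σ ∧ σ.card = 3),
        m σ ∈ L.filter (fun e => IsCritical L f e ∧ e.card = 2) ∧
        ∃ (σ' : Finset V) (p : List (Finset V)),
          σ' ∈ L ∧ Facet σ' σ ∧ GPath L f σ' (m σ) p :=
  matching_saturating_critical_two_simplices_general L hL hH2 f hf
end
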